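/- Let A be a square weakly diagonally dominant Z-matrix with nonnegative diagonals. Then A is weakly chained diagonally dominant if and only if A is nonsingular. -/
import Mathlib


open Finset Matrix

/-- a square weakly diagonally dominant Z-matrix with nonnegative diagonals
is weakly chained diagonally dominant (every row is connected, in the directed graph of the
matrix, to a strictly diagonally dominant row) if and only if it is nonsingular. -/
theorem wcdd_iff_nonsingular (n : ℕ) (A : Matrix (Fin n) (Fin n) ℝ)
    (hZ : ∀ i j, i ≠ j → A i j ≤ 0)
    (hdiag : ∀ i, 0 ≤ A i i)
    (hwdd : ∀ i, ∑ j ∈ univ \ {i}, |A i j| ≤ |A i i|) :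
    ((∀ i : Fin n, ∃ (r : ℕ) (p : ℕ → Fin n), p 0 = i ∧
        (∀ t < r, A (p t) (p (t + 1)) ≠ 0) ∧
        (∑ j ∈ univ \ {p r}, |A (p r) j| < |A (p r) (p r)|)) ↔ IsUnit A) := by
  classical
  constructor
  · -- WCDD → nonsingular
    intro hwcdd
    rw [Matrix.isUnit_iff_isUnit_det, isUnit_iff_ne_zero]
    intro hdet
    obtain ⟨v, hv0, hAv⟩ := Matrix.exists_mulVec_eq_zero_iff.mpr hdet
    obtain ⟨j0, hj0ne⟩ := Function.ne_iff.mp hv0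
    obtain ⟨i0, -, hmax⟩ := Finset.exists_max_image univ (fun i => |v i|) ⟨j0, mem_univ _⟩
    set M := |v i0| with hM
    have hMpos : 0 < M := lt_of_lt_of_le (abs_pos.mpr hj0ne) (hmax j0 (mem_univ _))
    have key : ∀ i, |v i| = M → (∀ j, A i j ≠ 0 → |v j| = M) ∧
        ¬(∑ j ∈ univ \ {i}, |A i j| < |A i i|) := by
      intro i hi
      have hrow : A i i * v i = -∑ j ∈ univ \ {i}, A i j * v j := by
        have h := congrFun hAv i
        simp only [Matrix.mulVec, dotProduct, Pi.zero_apply] at h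
        rw [← Finset.sum_sdiff (Finset.subset_univ {i}), Finset.sum_singleton] at h
        linarith
      have h1 : |A i i| * M ≤ ∑ j ∈ univ \ {i}, |A i j| * |v j| := by
        calc |A i i| * M = |A i i * v i| := by rw [abs_mul, hi]
          _ = |∑ j ∈ univ \ {i}, A i j * v j| := by rw [hrow, abs_neg]
          _ ≤ ∑ j ∈ univ \ {i}, |A i j * v j| := Finset.abs_sum_le_sum_abs _ _
          _ = ∑ j ∈ univ \ {i}, |A i j| * |v j| := by simp [abs_mul]
      have hle : ∀ j ∈ univ \ {i}, |A i j| * |v j| ≤ |A i j| * M :=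
        fun j _ => mul_le_mul_of_nonneg_left (hmax j (mem_univ _)) (abs_nonneg _)
      have h2 : ∑ j ∈ univ \ {i}, |A i j| * |v j| ≤ ∑ j ∈ univ \ {i}, |A i j| * M :=
        Finset.sum_le_sum hle
      have h3 : ∑ j ∈ univ \ {i}, |A i j| * M ≤ |A i i| * M := by
        rw [← Finset.sum_mul]
        exact mul_le_mul_of_nonneg_right (hwdd i) (le_of_lt hMpos)
      have heq : ∑ j ∈ univ \ {i}, |A i j| * |v j| = ∑ j ∈ univ \ {i}, |A i j| * M :=
        le_antisymm h2 (by linarith)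
      constructor
      · intro j hAj
        by_cases hji : j = i
        · rw [hji]; exact hi
        · have hj := (Finset.sum_eq_sum_iff_of_le hle).mp heq j
            (by simp [Finset.mem_sdiff, hji])
          exact mul_left_cancel₀ (abs_ne_zero.mpr hAj) hj
      · intro hsdd
        have : ∑ j ∈ univ \ {i}, |A i j| * M < |A i i| * M := by
          rw [← Finset.sum_mul]
          exact mul_lt_mul_of_pos_right hsdd hMpos
        linarith
    obtain ⟨r, p, hp0, hpe, hpsdd⟩ := hwcdd i0
    have hall : ∀ t, t ≤ r → |v (p t)| = M := by
      intro t
      induction t with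
      | zero => intro _; rw [hp0]
      | succ t ih =>
        intro h
        exact (key (p t) (ih (le_of_lt (Nat.lt_of_succ_le h)))).1 _
          (hpe t (Nat.lt_of_succ_le h))
    exact (key (p r) (hall r le_rfl)).2 hpsdd
  · -- nonsingular → WCDD
    intro hA i0
    by_contra hno
    push_neg at hno
    set R : Fin n → Prop := fun j => ∃ (r : ℕ) (p : ℕ → Fin n), p 0 = i0 ∧
      (∀ t < r, A (p t) (p (t + 1)) ≠ 0) ∧ p r = j with hRdef
    have hR0 : R i0 := ⟨0, fun _ => i0, rfl, fun t ht => absurd ht (Nat.not_lt_zero t), rfl⟩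
    have hRstep : ∀ i j, R i → A i j ≠ 0 → R j := by
      rintro i j ⟨r, p, hp0, hpe, hpr⟩ hij
      refine ⟨r + 1, fun t => if t < r + 1 then p t else j, by simp [hp0], ?_, by simp⟩
      intro t ht
      rcases Nat.lt_or_ge t r with h | h
      · simp only [if_pos ht, if_pos (by omega : t + 1 < r + 1)]
        exact hpe t h
      · have htr : t = r := by omega
        subst htr
        simp only [if_pos ht, if_neg (by omega : ¬(t + 1 < t + 1))]
        rw [hpr]; exact hij
    have hRnsdd : ∀ i, R i → |A i i| ≤ ∑ j ∈ univ \ {i}, |A i j| := by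
      rintro i ⟨r, p, hp0, hpe, hpr⟩
      have := hno r p hp0 hpe
      rwa [hpr] at this
    have hzero : ∀ i j, R i → ¬ R j → A i j = 0 := by
      intro i j hi hj
      by_contra h
      exact hj (hRstep i j hi h)
    -- the row sums over the reachable set vanish
    have hrowsum : ∀ i, R i → ∑ j ∈ univ.filter R, A i j = 0 := by
      intro i hi
      have hsub : ∑ j ∈ univ.filter R, A i j = ∑ j ∈ univ, A i j := by
        refine Finset.sum_subset (Finset.filter_subset _ _) ?_
        intro j _ hj
        exact hzero i j hi (by simpa using hj)
      have habs : ∀ j ∈ univ \ {i}, A i j = -|A i j| := by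
        intro j hj
        have hji : j ≠ i := by simpa [Finset.mem_sdiff] using hj
        rw [abs_of_nonpos (hZ i j hji.symm), neg_neg]
      have hsplit : ∑ j ∈ univ, A i j = A i i + ∑ j ∈ univ \ {i}, A i j := by
        rw [← Finset.sum_sdiff (Finset.subset_univ {i}), Finset.sum_singleton]
        ring
      have hneg : ∑ j ∈ univ \ {i}, A i j = -∑ j ∈ univ \ {i}, |A i j| := by
        rw [← Finset.sum_neg_distrib]
        exact Finset.sum_congr rfl habs
      have heqd : ∑ j ∈ univ \ {i}, |A i j| = A i i := by
        have := hRnsdd i hi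
        have h2 := hwdd i
        rw [abs_of_nonneg (hdiag i)] at this h2
        linarith
      rw [hsub, hsplit, hneg, heqd]; ring
    -- the principal submatrix on R kills the all-ones vector
    haveI : Fintype {j : Fin n // R j} := Subtype.fintype _
    set B : Matrix {j : Fin n // R j} {j : Fin n // R j} ℝ :=
      A.submatrix Subtype.val Subtype.val with hBdef
    have hB1 : B.mulVec 1 = 0 := by
      funext x
      have hsum : ∑ j ∈ univ.filter R, A x.val j = ∑ j : {j : Fin n // R j}, A x.val j.val :=
        Finset.sum_subtype _ (by simp) _
      simp only [Matrix.mulVec, dotProduct, Pi.one_apply, mul_one, Pi.zero_apply, hBdef,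
        Matrix.submatrix_apply]
      rw [← hsum]
      exact hrowsum x.val x.2
    have hBdet : B.det = 0 := by
      rw [← Matrix.exists_mulVec_eq_zero_iff]
      refine ⟨1, ?_, hB1⟩
      intro h
      exact one_ne_zero (congrFun h ⟨i0, hR0⟩)
    have hBTdet : Bᵀ.det = 0 := by rw [Matrix.det_transpose]; exact hBdet
    obtain ⟨w, hw0, hBw⟩ := Matrix.exists_mulVec_eq_zero_iff.mpr hBTdet
    have hwB : Matrix.vecMul w B = 0 := by
      rwa [Matrix.mulVec_transpose] at hBw
    set y : Fin n → ℝ := fun i => if h : R i then w ⟨i, h⟩ else 0 with hydef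
    have hy0 : y ≠ 0 := by
      obtain ⟨k, hk⟩ := Function.ne_iff.mp hw0
      intro h
      apply hk
      have := congrFun h k.val
      simpa [hydef, dif_pos k.2] using this
    have hyA : Matrix.vecMul y A = 0 := by
      funext j
      have hsum1 : ∑ i ∈ univ, y i * A i j = ∑ i ∈ univ.filter R, y i * A i j := by
        symm
        refine Finset.sum_subset (Finset.filter_subset _ _) ?_
        intro i _ hi
        have : ¬ R i := by simpa using hi
        simp [hydef, dif_neg this]
      have hsum2 : ∑ i ∈ univ.filter R, y i * A i j
          = ∑ i : {j : Fin n // R j}, w i * A i.val j := by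
        rw [Finset.sum_subtype _ (by simp : ∀ x, x ∈ univ.filter R ↔ R x)
          (fun i => y i * A i j)]
        refine Finset.sum_congr rfl ?_
        intro x _
        simp [hydef, dif_pos x.2]
      simp only [Matrix.vecMul, dotProduct, Pi.zero_apply]
      rw [hsum1, hsum2]
      by_cases hj : R j
      · have := congrFun hwB ⟨j, hj⟩
        simpa [Matrix.vecMul, dotProduct, hBdef, Matrix.submatrix_apply] using this
      · refine Finset.sum_eq_zero ?_
        intro x _
        rw [hzero x.val j x.2 hj, mul_zero]
    have : A.det = 0 := Matrix.exists_vecMul_eq_zero_iff.mp ⟨y, hy0, hyA⟩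
    rw [Matrix.isUnit_iff_isUnit_det, isUnit_iff_ne_zero] at hA
    exact hA this
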